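/- Let w_1,…,w_K be reals with |w_i| ≤ 1, W̄ = (1/K)∑ w_i, S² = (1/K)∑ w_i² > 0, and let λ satisfy ∑ w_i/(1+λw_i)=0 with 1+λw_i > 0 for all i. Then |λ| ≤ |W̄| / (S² − |W̄|) whenever S² > |W̄|. -/

import Mathlib

/-!
Since `w / (1 + λ w) = w - λ w² / (1 + λ w)`, the estimating equation gives
`λ ∑ w² / (1 + λ w) = ∑ w`. Each denominator satisfies `0 < 1 + λ w ≤ 1 + |λ|` because
`|w| ≤ 1`, so `|λ| ∑ w² / (1 + |λ|) ≤ |∑ w|`; dividing by `K` and solving for `|λ|` gives the bound.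
-/

open Finset

namespace EmpiricalLikelihood

variable {ι : Type*} (s : Finset ι) (w : ι → ℝ) (lam : ℝ)

lemma div_one_add_mul_eq_sub {x : ℝ} (hx : 1 + lam * x ≠ 0) :
    x / (1 + lam * x) = x - lam * (x ^ 2 / (1 + lam * x)) := by
  rw [← mul_div_assoc, sub_div' hx]
  ring

lemma mul_sum_sq_div_eq_sum (hlam : ∀ i ∈ s, 1 + lam * w i ≠ 0)
    (hzero : ∑ i ∈ s, w i / (1 + lam * w i) = 0) :
    lam * ∑ i ∈ s, w i ^ 2 / (1 + lam * w i) = ∑ i ∈ s, w i := by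
  rw [sum_congr rfl fun i hi => div_one_add_mul_eq_sub lam (hlam i hi), sum_sub_distrib,
    ← mul_sum] at hzero
  linarith

lemma sum_sq_div_le_sum_sq_div (hw : ∀ i ∈ s, |w i| ≤ 1) (hlam : ∀ i ∈ s, 0 < 1 + lam * w i) :
    (∑ i ∈ s, w i ^ 2) / (1 + |lam|) ≤ ∑ i ∈ s, w i ^ 2 / (1 + lam * w i) := by
  rw [sum_div]
  refine sum_le_sum fun i hi => div_le_div_of_nonneg_left (sq_nonneg _) (hlam i hi) ?_
  have : lam * w i ≤ |lam| :=
    calc lam * w i ≤ |lam| * |w i| := abs_mul lam (w i) ▸ le_abs_self _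
      _ ≤ |lam| := mul_le_of_le_one_right (abs_nonneg lam) (hw i hi)
  linarith

/-- Owen's inequality, before normalisation by the sample size. -/
theorem abs_mul_sum_sq_le (hw : ∀ i ∈ s, |w i| ≤ 1) (hlam : ∀ i ∈ s, 0 < 1 + lam * w i)
    (hzero : ∑ i ∈ s, w i / (1 + lam * w i) = 0) :
    |lam| * ∑ i ∈ s, w i ^ 2 ≤ (1 + |lam|) * |∑ i ∈ s, w i| := by
  set T := ∑ i ∈ s, w i ^ 2 / (1 + lam * w i)
  have hden : 0 < 1 + |lam| := by positivity
  have hT : (∑ i ∈ s, w i ^ 2) / (1 + |lam|) ≤ T := sum_sq_div_le_sum_sq_div s w lam hw hlam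
  have hT₀ : 0 ≤ T := (div_nonneg (sum_nonneg fun i _ => sq_nonneg _) hden.le).trans hT
  have hsum : |∑ i ∈ s, w i| = |lam| * T := by
    rw [← mul_sum_sq_div_eq_sum s w lam (fun i hi => (hlam i hi).ne') hzero, abs_mul,
      abs_of_nonneg hT₀]
  have h := mul_le_mul_of_nonneg_left hT (abs_nonneg lam)
  rw [← mul_div_assoc, div_le_iff₀ hden] at h
  rw [hsum]
  linarith

end EmpiricalLikelihood

theorem stmt12_general (K : ℕ) (w : Fin K → ℝ)
    (hw : ∀ i, |w i| ≤ 1)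
    (Wbar S2 : ℝ)
    (hWbar : Wbar = (1 / (K : ℝ)) * ∑ i, w i)
    (hS2 : S2 = (1 / (K : ℝ)) * ∑ i, (w i) ^ 2)
    (lam : ℝ) (hlam : ∀ i, 0 < 1 + lam * w i)
    (hzero : ∑ i, w i / (1 + lam * w i) = 0)
    (hgap : |Wbar| < S2) :
    |lam| ≤ |Wbar| / (S2 - |Wbar|) := by
  have hK : (0 : ℝ) ≤ 1 / (K : ℝ) := by positivity
  have howen := EmpiricalLikelihood.abs_mul_sum_sq_le univ w lam (fun i _ => hw i)
    (fun i _ => hlam i) hzero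
  have hnormalised : |lam| * S2 ≤ (1 + |lam|) * |Wbar| := by
    rw [hS2, hWbar, abs_mul, abs_of_nonneg hK]
    nlinarith [mul_le_mul_of_nonneg_left howen hK]
  rw [le_div_iff₀ (sub_pos.mpr hgap)]
  linarith

/-- Owen's bound on the empirical likelihood Lagrange multiplier in the
bounded case `|w i| ≤ 1`: if `∑ w i/(1 + λ w i) = 0` with `1 + λ w i > 0`
for all `i`, and `S² = (1/K) ∑ w i² > |W̄| = |(1/K) ∑ w i|`, then
`|λ| ≤ |W̄|/(S² − |W̄|)`. -/
theorem stmt12 (K : ℕ) (hK : 0 < K) (w : Fin K → ℝ)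
    (hw : ∀ i, |w i| ≤ 1)
    (Wbar S2 : ℝ)
    (hWbar : Wbar = (1 / (K : ℝ)) * ∑ i, w i)
    (hS2 : S2 = (1 / (K : ℝ)) * ∑ i, (w i) ^ 2)
    (hS2pos : 0 < S2)
    (lam : ℝ) (hlam : ∀ i, 0 < 1 + lam * w i)
    (hzero : ∑ i, w i / (1 + lam * w i) = 0)
    (hgap : |Wbar| < S2) :
    |lam| ≤ |Wbar| / (S2 - |Wbar|) :=
  stmt12_general K w hw Wbar S2 hWbar hS2 lam hlam hzero hgap
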